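/- Under the same bipartite magic gauge, if exactly one of the two logicals (say Z̄) has a representative supported on A while Ȳ does not, the reduced state is σ_A = 2^{-|A|}(I_A + Z̄_A/√2) ∏_{i=1}^k (I_A + a_i), and M̃₂(σ_A) = log₂(6/5). -/

import Mathlib

open Matrix BigOperators Finset

/-- The four single-qubit Pauli matrices `I, X, Y, Z`. -/
noncomputable def pauli1 : Fin 4 → Matrix (Fin 2) (Fin 2) ℂ :=
  ![(1 : Matrix (Fin 2) (Fin 2) ℂ),
    !![0, 1; 1, 0],
    !![0, -Complex.I; Complex.I, 0],
    !![1, 0; 0, -1]]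

/-- The `n`-qubit Pauli string `⨂ₖ pauli1 (s k)` as a matrix on `(Fin n → Fin 2)`. -/
noncomputable def pauliString {n : ℕ} (s : Fin n → Fin 4) :
    Matrix (Fin n → Fin 2) (Fin n → Fin 2) ℂ :=
  Matrix.of fun i j => ∏ k, pauli1 (s k) (i k) (j k)

/-- `M` is a Pauli operator with phase `±1`. -/
def IsPauliPM {n : ℕ} (M : Matrix (Fin n → Fin 2) (Fin n → Fin 2) ℂ) : Prop :=
  ∃ (ε : ℂ) (s : Fin n → Fin 4), (ε = 1 ∨ ε = -1) ∧ M = ε • pauliString s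

/-- `M` is a `±1`-phase Pauli operator whose support is contained in `A`. -/
def SuppIn {n : ℕ} (A : Finset (Fin n)) (M : Matrix (Fin n → Fin 2) (Fin n → Fin 2) ℂ) : Prop :=
  ∃ (ε : ℂ) (s : Fin n → Fin 4), (ε = 1 ∨ ε = -1) ∧ M = ε • pauliString s ∧
    ∀ k ∉ A, s k = 0

/-- The element `∏_{i : f i} g i` of the group generated by the (commuting) `g i`. -/
noncomputable def grpElem {n m : ℕ} (g : Fin m → Matrix (Fin n → Fin 2) (Fin n → Fin 2) ℂ)
    (f : Fin m → Bool) : Matrix (Fin n → Fin 2) (Fin n → Fin 2) ℂ :=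
  ((List.finRange m).map (fun i => if f i then g i else 1)).prod

/-- Mixed-state stabilizer 2-Rényi entropy
`M̃₂(ρ) = −log₂( Σ_P Tr(ρP)⁴ / Σ_P Tr(ρP)² )`. -/
noncomputable def sre2 {n : ℕ} (ρ : Matrix (Fin n → Fin 2) (Fin n → Fin 2) ℂ) : ℝ :=
  - Real.logb 2 (((∑ P : Fin n → Fin 4, ((ρ * pauliString P).trace) ^ 4) /
      (∑ P : Fin n → Fin 4, ((ρ * pauliString P).trace) ^ 2)).re)

/-!
Expanding the products, `σ_A = 2^{-q} ∑_f w_f G_f` where `G_f` runs over the group generated by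
`Z̄, a_1, …, a_k`, with weight `w_f = 1` on `⟨a_i⟩` and `w_f = 1/√2` on the coset `Z̄⟨a_i⟩`.
The hypotheses make the `2^{k+1}` elements `G_f` signed Pauli strings with pairwise distinct
underlying strings, so by orthogonality of Pauli strings `Tr(σ_A P) = ±w_f` when `P = ±G_f` and
`0` otherwise. Hence `∑_P Tr(σ_A P)^p = 2^k (1 + 2^{-p/2})` for even `p`, and the ratio in `M̃₂`
is `(5/4)/(3/2) = 5/6`.
-/

section KroneckerPi

variable {ι m R : Type*} [Fintype ι] [CommSemiring R]

def kroneckerPi (A : ι → Matrix m m R) : Matrix (ι → m) (ι → m) R :=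
  of fun i j => ∏ k, A k (i k) (j k)

lemma kroneckerPi_mul [DecidableEq ι] [Fintype m] (A B : ι → Matrix m m R) :
    kroneckerPi A * kroneckerPi B = kroneckerPi (A * B) := by
  ext i j
  simp only [kroneckerPi, mul_apply, of_apply, Pi.mul_apply, ← prod_mul_distrib]
  exact (Fintype.prod_sum fun k x => A k (i k) x * B k x (j k)).symm

lemma trace_kroneckerPi [DecidableEq ι] [Fintype m] (A : ι → Matrix m m R) :
    (kroneckerPi A).trace = ∏ k, (A k).trace := by
  simp only [trace, Matrix.diag, kroneckerPi, of_apply]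
  exact (Fintype.prod_sum fun k x => A k x x).symm

lemma kroneckerPi_smul (c : ι → R) (A : ι → Matrix m m R) :
    kroneckerPi (fun k => c k • A k) = (∏ k, c k) • kroneckerPi A := by
  ext i j
  simp [kroneckerPi, prod_mul_distrib]

lemma kroneckerPi_one [DecidableEq m] :
    kroneckerPi (fun _ : ι => (1 : Matrix m m R)) = 1 := by
  ext i j
  simp only [kroneckerPi, of_apply, one_apply, prod_boole]
  simp [funext_iff]

end KroneckerPi

section PauliString

variable {n : ℕ}

/-- Pauli indices multiply like the Klein four-group:
`σ_x σ_y = pauliPhase x y • σ_(pauliProd x y)`. -/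
def pauliProd : Fin 4 → Fin 4 → Fin 4 :=
  ![![0, 1, 2, 3], ![1, 0, 3, 2], ![2, 3, 0, 1], ![3, 2, 1, 0]]

noncomputable def pauliPhase : Fin 4 → Fin 4 → ℂ :=
  ![![1, 1, 1, 1], ![1, 1, Complex.I, -Complex.I], ![1, -Complex.I, 1, Complex.I],
    ![1, Complex.I, -Complex.I, 1]]

lemma pauli1_mul (x y : Fin 4) :
    pauli1 x * pauli1 y = pauliPhase x y • pauli1 (pauliProd x y) := by
  fin_cases x <;> fin_cases y <;>
    · ext i j
      fin_cases i <;> fin_cases j <;>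
        simp [pauli1, pauliPhase, pauliProd, mul_apply, Fin.sum_univ_two, one_apply]

lemma pauli1_mul_self (x : Fin 4) : pauli1 x * pauli1 x = 1 := by
  fin_cases x <;>
    · ext i j
      fin_cases i <;> fin_cases j <;> simp [pauli1, mul_apply, Fin.sum_univ_two]

lemma trace_pauli1_mul (x y : Fin 4) :
    (pauli1 x * pauli1 y).trace = if x = y then 2 else 0 := by
  fin_cases x <;> fin_cases y <;>
    simp [pauli1, trace, Fin.sum_univ_two] <;> norm_num

lemma pauliString_eq_kroneckerPi (s : Fin n → Fin 4) :
    pauliString s = kroneckerPi fun k => pauli1 (s k) :=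
  rfl

lemma pauliString_mul (s t : Fin n → Fin 4) :
    pauliString s * pauliString t =
      (∏ k, pauliPhase (s k) (t k)) • pauliString fun k => pauliProd (s k) (t k) := by
  simp only [pauliString_eq_kroneckerPi, kroneckerPi_mul, ← kroneckerPi_smul, ← pauli1_mul]
  rfl

lemma pauliString_mul_self (s : Fin n → Fin 4) : pauliString s * pauliString s = 1 := by
  simp only [pauliString_eq_kroneckerPi, kroneckerPi_mul]
  exact (congrArg kroneckerPi (funext fun k => pauli1_mul_self (s k))).trans kroneckerPi_one

lemma trace_pauliString_mul (s t : Fin n → Fin 4) :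
    (pauliString s * pauliString t).trace = if s = t then 2 ^ n else 0 := by
  simp only [pauliString_eq_kroneckerPi, kroneckerPi_mul, trace_kroneckerPi, Pi.mul_apply,
    trace_pauli1_mul, prod_ite_zero, funext_iff]
  simp

end PauliString

section IsPauliPM

variable {n : ℕ} {M N : Matrix (Fin n → Fin 2) (Fin n → Fin 2) ℂ}

lemma isPauliPM_one : IsPauliPM (1 : Matrix (Fin n → Fin 2) (Fin n → Fin 2) ℂ) :=
  ⟨1, fun _ => 0, Or.inl rfl, by
    rw [one_smul, pauliString_eq_kroneckerPi]
    exact kroneckerPi_one.symm⟩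

lemma IsPauliPM.mul_self (hM : IsPauliPM M) : M * M = 1 := by
  obtain ⟨ε, s, hε, rfl⟩ := hM
  rw [smul_mul_smul_comm, pauliString_mul_self, mul_self_eq_one_iff.mpr hε, one_smul]

lemma isPauliPM_smul_pauliString_of_mul_self {c : ℂ} {s : Fin n → Fin 4}
    (h : (c • pauliString s) * (c • pauliString s) = 1) : IsPauliPM (c • pauliString s) := by
  rw [smul_mul_smul_comm, pauliString_mul_self] at h
  have hc : c * c = 1 := by simpa using congrFun (congrFun h 0) 0
  exact ⟨c, s, mul_self_eq_one_iff.mp hc, rfl⟩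

lemma IsPauliPM.mul (hM : IsPauliPM M) (hN : IsPauliPM N) (hMN : Commute M N) :
    IsPauliPM (M * N) := by
  have hsq : (M * N) * (M * N) = 1 := by
    rw [hMN.symm.mul_mul_mul_comm, hM.mul_self, hN.mul_self, one_mul]
  obtain ⟨ε, s, -, rfl⟩ := hM
  obtain ⟨δ, t, -, rfl⟩ := hN
  rw [smul_mul_smul_comm, pauliString_mul, smul_smul] at hsq ⊢
  exact isPauliPM_smul_pauliString_of_mul_self hsq

end IsPauliPM

section PauliExpansion

variable {n : ℕ} {ι : Type*} [Fintype ι]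

lemma sum_trace_mul_pauliString_pow_of_injective {s : ι → Fin n → Fin 4}
    (hs : Function.Injective s) (d : ι → ℂ) {p : ℕ} (hp : p ≠ 0) :
    ∑ t, ((∑ j, d j • pauliString (s j)) * pauliString t).trace ^ p = ∑ j, (2 ^ n * d j) ^ p := by
  have htrace : ∀ t, ((∑ j, d j • pauliString (s j)) * pauliString t).trace
      = ∑ j, if s j = t then 2 ^ n * d j else 0 := fun t => by
    simp only [Matrix.sum_mul, trace_sum, smul_mul, trace_smul, trace_pauliString_mul,
      smul_eq_mul, mul_ite, mul_zero, mul_comm]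
  refine (Fintype.sum_of_injective s hs _ _ (fun t ht => ?_) (fun j => ?_)).symm
  · rw [htrace, sum_eq_zero fun j _ => if_neg fun h => ht ⟨j, h⟩, zero_pow hp]
  · classical
    simp [htrace, hs.eq_iff]

lemma sum_trace_mul_pauliString_pow {M : ι → Matrix (Fin n → Fin 2) (Fin n → Fin 2) ℂ}
    (hM : ∀ j, IsPauliPM (M j))
    (hdistinct : ∀ j j' (ε : ℂ), (ε = 1 ∨ ε = -1) → M j = ε • M j' → j = j')
    (c : ι → ℂ) {p : ℕ} (hp : Even p) (hp0 : p ≠ 0) :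
    ∑ t, ((∑ j, c j • M j) * pauliString t).trace ^ p = ∑ j, (2 ^ n * c j) ^ p := by
  choose ε s hε hMs using hM
  have hεε : ∀ j, ε j * ε j = 1 := fun j => mul_self_eq_one_iff.mpr (hε j)
  have hs : Function.Injective s := fun j j' hjj' => by
    refine hdistinct j j' (ε j * ε j') ?_ ?_
    · exact mul_self_eq_one_iff.mp (by rw [mul_mul_mul_comm, hεε, hεε, one_mul])
    · rw [hMs j, hjj', hMs j', smul_smul, mul_assoc, hεε, mul_one]
  simp only [hMs, smul_smul]
  rw [sum_trace_mul_pauliString_pow_of_injective hs _ hp0]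
  refine sum_congr rfl fun j _ => ?_
  rcases hε j with h | h <;> simp [h, hp.neg_pow]

end PauliExpansion

lemma commute_cons_cons {M : Type*} [Monoid M] {m : ℕ} {g : Fin m → M} {x : M}
    (hc : ∀ i j, Commute (g i) (g j)) (hx : ∀ i, Commute x (g i)) (i j : Fin (m + 1)) :
    Commute ((Fin.cons x g : Fin (m + 1) → M) i) ((Fin.cons x g : Fin (m + 1) → M) j) := by
  induction i using Fin.cases <;> induction j using Fin.cases
  exacts [Commute.refl x, hx _, (hx _).symm, hc _ _]

section GroupElement

variable {n : ℕ}

/-- The `g i` are independent generators of a stabilizer group not containing `-1`. -/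
def IndepUpToSign {m : ℕ} (g : Fin m → Matrix (Fin n → Fin 2) (Fin n → Fin 2) ℂ) : Prop :=
  ∀ (f : Fin m → Bool) (ε : ℂ), (ε = 1 ∨ ε = -1) → grpElem g f = ε • 1 → f = fun _ => false

lemma grpElem_false {m : ℕ} (g : Fin m → Matrix (Fin n → Fin 2) (Fin n → Fin 2) ℂ) :
    grpElem g (fun _ => false) = 1 := by
  simp [grpElem]

lemma grpElem_succ {m : ℕ} (g : Fin (m + 1) → Matrix (Fin n → Fin 2) (Fin n → Fin 2) ℂ)
    (f : Fin (m + 1) → Bool) :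
    grpElem g f = (if f 0 then g 0 else 1) * grpElem (fun i => g i.succ) (fun i => f i.succ) := by
  simp only [grpElem, List.finRange_succ, List.map_cons, List.prod_cons, List.map_map,
    Function.comp_def]

lemma Commute.grpElem_right {m : ℕ} {g : Fin m → Matrix (Fin n → Fin 2) (Fin n → Fin 2) ℂ}
    {M : Matrix (Fin n → Fin 2) (Fin n → Fin 2) ℂ} (h : ∀ i, Commute M (g i))
    (f : Fin m → Bool) : Commute M (grpElem g f) := by
  refine Commute.list_prod_right _ _ fun x hx => ?_
  obtain ⟨i, -, rfl⟩ := List.mem_map.mp hx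
  split_ifs
  exacts [h i, Commute.one_right M]

variable {m : ℕ} {g : Fin m → Matrix (Fin n → Fin 2) (Fin n → Fin 2) ℂ}

lemma isPauliPM_grpElem (hg : ∀ i, IsPauliPM (g i)) (hc : ∀ i j, Commute (g i) (g j))
    (f : Fin m → Bool) : IsPauliPM (grpElem g f) := by
  induction m with
  | zero => simpa [grpElem] using isPauliPM_one
  | succ m ih =>
    rw [grpElem_succ]
    have hhead : IsPauliPM (if f 0 then g 0 else 1) := by
      split_ifs
      exacts [hg 0, isPauliPM_one]
    refine hhead.mul (ih (fun i => hg _) (fun i j => hc _ _) _) (Commute.grpElem_right ?_ _)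
    intro i
    split_ifs
    exacts [hc 0 i.succ, Commute.one_left _]

lemma grpElem_mul_grpElem (hc : ∀ i j, Commute (g i) (g j)) (hsq : ∀ i, g i * g i = 1)
    (f f' : Fin m → Bool) :
    grpElem g f * grpElem g f' = grpElem g fun i => xor (f i) (f' i) := by
  induction m with
  | zero => simp [grpElem]
  | succ m ih =>
    have hcomm : Commute (grpElem (fun i => g i.succ) fun i => f i.succ)
        (if f' 0 then g 0 else 1) := by
      refine (Commute.grpElem_right (fun i => ?_) _).symm
      split_ifs
      exacts [hc 0 i.succ, Commute.one_left _]
    have hhead : (if f 0 then g 0 else 1) * (if f' 0 then g 0 else 1) =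
        if xor (f 0) (f' 0) then g 0 else 1 := by
      cases f 0 <;> cases f' 0 <;> simp [hsq 0]
    rw [grpElem_succ g f, grpElem_succ g f', hcomm.mul_mul_mul_comm, hhead,
      ih (g := fun i => g i.succ) (fun i j => hc _ _) (fun i => hsq _), grpElem_succ]

lemma grpElem_mul_self (hc : ∀ i j, Commute (g i) (g j)) (hsq : ∀ i, g i * g i = 1)
    (f : Fin m → Bool) : grpElem g f * grpElem g f = 1 := by
  simp [grpElem_mul_grpElem hc hsq, grpElem_false]

lemma IndepUpToSign.eq_of_grpElem_eq_smul (hg : IndepUpToSign g)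
    (hc : ∀ i j, Commute (g i) (g j)) (hsq : ∀ i, g i * g i = 1) {f f' : Fin m → Bool} {ε : ℂ}
    (hε : ε = 1 ∨ ε = -1) (h : grpElem g f = ε • grpElem g f') : f = f' := by
  have hxor := hg (fun i => xor (f i) (f' i)) ε hε <| by
    rw [← grpElem_mul_grpElem hc hsq, h, smul_mul, grpElem_mul_self hc hsq]
  funext i
  simpa using congrFun hxor i

lemma IndepUpToSign.cons {Zb : Matrix (Fin n → Fin 2) (Fin n → Fin 2) ℂ} (hg : IndepUpToSign g)
    (hc : ∀ i j, Commute (g i) (g j)) (hsq : ∀ i, g i * g i = 1)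
    (hZb : ∀ (f : Fin m → Bool) (ε : ℂ), (ε = 1 ∨ ε = -1) → Zb ≠ ε • grpElem g f) :
    IndepUpToSign (Fin.cons Zb g : Fin (m + 1) → _) := by
  intro f ε hε h
  simp only [grpElem_succ, Fin.cons_zero, Fin.cons_succ] at h
  cases hf : f 0 <;> simp only [hf, Bool.false_eq_true, if_false, if_true, one_mul] at h
  · have htail := hg _ ε hε h
    funext i
    exact Fin.cases hf (fun i => congrFun htail i) i
  · refine absurd ?_ (hZb (fun i => f i.succ) ε hε)
    rw [← mul_one Zb, ← grpElem_mul_self hc hsq, ← mul_assoc, h, smul_mul, one_mul]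

lemma IndepUpToSign.of_injective (hinj : ∀ f f' : Fin m → Bool, grpElem g f = grpElem g f' → f = f')
    (hneg : ∀ f : Fin m → Bool, grpElem g f ≠ -1) : IndepUpToSign g := by
  rintro f ε (rfl | rfl) h
  · exact hinj _ _ (by rw [h, one_smul, grpElem_false])
  · exact absurd (by rw [h, neg_one_smul]) (hneg f)

end GroupElement

section Expansion

variable {n m : ℕ}

lemma list_prod_one_add_smul (g : Fin m → Matrix (Fin n → Fin 2) (Fin n → Fin 2) ℂ)
    (w : Fin m → ℂ) :
    ((List.finRange m).map fun i => 1 + w i • g i).prod =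
      ∑ f : Fin m → Bool, (∏ i, if f i then w i else 1) • grpElem g f := by
  induction m with
  | zero => simp [grpElem]
  | succ m ih =>
    rw [List.finRange_succ, List.map_cons, List.prod_cons, List.map_map, Function.comp_def,
      ih (fun i => g i.succ) (fun i => w i.succ), ← (Fin.consEquiv fun _ => Bool).sum_comp,
      Fintype.sum_prod_type, Fintype.sum_bool, add_mul, one_mul, add_comm, mul_sum]
    congr 1 <;> refine sum_congr rfl fun f _ => ?_
    all_goals
      simp [Fin.consEquiv, grpElem_succ, Fin.prod_univ_succ, smul_smul, mul_comm]

lemma sum_prod_ite_bool {ι R : Type*} [Fintype ι] [DecidableEq ι] [CommSemiring R] (x : ι → R) :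
    ∑ f : ι → Bool, ∏ i, (if f i then x i else 1) = ∏ i, (x i + 1) := by
  rw [← Fintype.prod_sum fun i (b : Bool) => if b then x i else 1]
  simp

lemma sum_trace_mul_pauliString_pow_of_list_prod
    {g : Fin m → Matrix (Fin n → Fin 2) (Fin n → Fin 2) ℂ} (hg : ∀ i, IsPauliPM (g i))
    (hc : ∀ i j, Commute (g i) (g j)) (hind : IndepUpToSign g) (c : ℂ) (w : Fin m → ℂ)
    {p : ℕ} (hp : Even p) (hp0 : p ≠ 0) :
    ∑ t, ((c • ((List.finRange m).map fun i => 1 + w i • g i).prod) * pauliString t).trace ^ p =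
      (2 ^ n * c) ^ p * ∏ i, (w i ^ p + 1) := by
  have hsq : ∀ i, g i * g i = 1 := fun i => (hg i).mul_self
  simp only [list_prod_one_add_smul, smul_sum, smul_smul]
  rw [sum_trace_mul_pauliString_pow (isPauliPM_grpElem hg hc)
    (fun f f' ε hε h => hind.eq_of_grpElem_eq_smul hc hsq hε h) _ hp hp0,
    ← sum_prod_ite_bool, mul_sum]
  refine sum_congr rfl fun f _ => ?_
  rw [← mul_assoc, mul_pow, ← prod_pow]
  simp only [apply_ite (· ^ p), one_pow]

end Expansion

/-- bipartite magic gauge, case only `Z̄` survives: for the reduced state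
`σ_A = 2^{-|A|}(I + Z̄_A/√2)∏ᵢ(I + aᵢ)` with `Z̄_A` a Hermitian Pauli commuting with the
independent commuting generators `aᵢ` and not in `±⟨aᵢ⟩`, one has `M̃₂(σ_A) = log₂(6/5)`. -/
theorem stmt_11 {q k : ℕ}
    (a : Fin k → Matrix (Fin q → Fin 2) (Fin q → Fin 2) ℂ)
    (Zb : Matrix (Fin q → Fin 2) (Fin q → Fin 2) ℂ)
    (ha : ∀ i, IsPauliPM (a i))
    (hcomm : ∀ i i', a i * a i' = a i' * a i)
    (hindep : ∀ f f' : Fin k → Bool, grpElem a f = grpElem a f' → f = f')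
    (hnoNegI : ∀ f : Fin k → Bool, grpElem a f ≠ -1)
    (hZb : IsPauliPM Zb)
    (hZcomm : ∀ i, Zb * a i = a i * Zb)
    (hZnot : ∀ (f : Fin k → Bool) (ε : ℂ), (ε = 1 ∨ ε = -1) → Zb ≠ ε • grpElem a f)
    (σA : Matrix (Fin q → Fin 2) (Fin q → Fin 2) ℂ)
    (hσA : σA = ((1 : ℂ)/2 ^ q) •
      ((1 + ((Real.sqrt 2 : ℂ))⁻¹ • Zb) *
        ((List.finRange k).map (fun i => 1 + a i)).prod)) :
    sre2 σA = Real.logb 2 (6 / 5) := by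
  set r : ℂ := (Real.sqrt 2 : ℂ)⁻¹
  set g : Fin (k + 1) → Matrix (Fin q → Fin 2) (Fin q → Fin 2) ℂ := Fin.cons Zb a
  set w : Fin (k + 1) → ℂ := Fin.cons r 1
  have hgind : IndepUpToSign g :=
    (IndepUpToSign.of_injective hindep hnoNegI).cons hcomm (fun i => (ha i).mul_self) hZnot
  have hσ : σA = (1 / 2 ^ q : ℂ) • ((List.finRange (k + 1)).map fun i => 1 + w i • g i).prod := by
    simp [hσA, List.finRange_succ, w, g, Function.comp_def]
  have hpow : ∀ p, Even p → p ≠ 0 →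
      ∑ t, ((σA * pauliString t).trace) ^ p = (r ^ p + 1) * 2 ^ k := fun p hp hp0 => by
    rw [hσ, sum_trace_mul_pauliString_pow_of_list_prod (Fin.cases hZb ha)
      (commute_cons_cons hcomm hZcomm) hgind _ _ hp hp0,
      mul_one_div_cancel (pow_ne_zero q (two_ne_zero' ℂ)), one_pow, one_mul, Fin.prod_univ_succ]
    simp [w, one_add_one_eq_two]
  have hr2 : r ^ 2 = 1 / 2 := by
    simp [r, inv_pow, ← Complex.ofReal_pow]
  rw [sre2, hpow 4 (by decide) (by norm_num), hpow 2 (by decide) (by norm_num),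
    show r ^ 4 = (r ^ 2) ^ 2 by ring, hr2]
  have hratio : ((1 / 2 : ℂ) ^ 2 + 1) * 2 ^ k / ((1 / 2 + 1) * 2 ^ k) = ((6 / 5 : ℝ)⁻¹ : ℝ) := by
    push_cast
    field_simp
    norm_num
  rw [hratio, Complex.ofReal_re, Real.logb_inv, neg_neg]
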